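/- Let Σ = {a, b, a', b'} and let φ : {a,b}* → {a',b'}* be the monoid morphism with φ(a) = a' and φ(b) = b'. The language L_c = ⋃_{w ∈ {a,b}*} sh(w, φ(w)), consisting of all shuffles of a word w ∈ {a,b}* with its primed copy φ(w), is accepted by a DFAwtl. -/

import Mathlib

/-- The end-of-tape behaviour of a non-returning automaton with translucent
letters: either a set of states to continue with (the empty set meaning that
the transition is undefined), or the operation `Accept`. -/
inductive EndMove (Q : Type) where
  | cont : Set Q → EndMove Q
  | accept : EndMove Q

/-- A nondeterministic finite automaton with translucent letters (NFAwtl).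
`τ q` is the set of letters that are translucent for state `q`. -/
structure NFAwtl (Q : Type) (A : Type) where
  τ : Q → Set A
  I : Set Q
  F : Set Q
  δ : Q → A → Set Q
  tr_compat : ∀ q a, a ∈ τ q → δ q a = ∅

namespace NFAwtl

variable {Q A : Type}

/-- A single computation step of an NFAwtl: the first letter (from the left)
that is not translucent for the current state is read and deleted. -/
inductive Step (M : NFAwtl Q A) : Q × List A → Q × List A → Prop
  | read (q q' : Q) (u v : List A) (a : A) :
      (∀ b ∈ u, b ∈ M.τ q) → a ∉ M.τ q → q' ∈ M.δ q a →
      Step M (q, u ++ a :: v) (q', u ++ v)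

/-- The language accepted by an NFAwtl: words from which some computation
reaches a configuration whose remaining tape contents is translucent for a
final state. -/
def lang (M : NFAwtl Q A) : Set (List A) :=
  { w | ∃ q₀ ∈ M.I, ∃ q w', Relation.ReflTransGen (Step M) (q₀, w) (q, w') ∧
        (∀ b ∈ w', b ∈ M.τ q) ∧ q ∈ M.F }

/-- An NFAwtl is deterministic (a DFAwtl) if it has a single initial state and
at most one transition for each state/letter pair. -/
def IsDet (M : NFAwtl Q A) : Prop :=
  (∃ q, M.I = {q}) ∧ ∀ q a, (M.δ q a).Subsingleton

end NFAwtl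

/-- A configuration of a non-returning automaton with translucent letters:
`conf x q w` means the tape contains `x ++ w` followed by the end-of-tape
marker, the current state is `q`, and the head is positioned at the first
letter of `w`; `accept` is the accepting halting configuration. -/
inductive NrConf (Q : Type) (A : Type) where
  | conf : List A → Q → List A → NrConf Q A
  | accept : NrConf Q A

/-- A non-returning nondeterministic finite automaton with translucent
letters (nrNFAwtl). -/
structure NrNFAwtl (Q : Type) (A : Type) where
  τ : Q → Set A
  I : Set Q
  δ : Q → A → Set Q
  δend : Q → EndMove Q
  tr_compat : ∀ q a, a ∈ τ q → δ q a = ∅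

namespace NrNFAwtl

variable {Q A : Type}

/-- A single computation step of an nrNFAwtl. -/
inductive Step (M : NrNFAwtl Q A) : NrConf Q A → NrConf Q A → Prop
  | read (x : List A) (q q' : Q) (u v : List A) (a : A) :
      (∀ b ∈ u, b ∈ M.τ q) → a ∉ M.τ q → q' ∈ M.δ q a →
      Step M (.conf x q (u ++ a :: v)) (.conf (x ++ u) q' v)
  | restart (x w : List A) (q q' : Q) (S : Set Q) :
      (∀ b ∈ w, b ∈ M.τ q) → M.δend q = .cont S → q' ∈ S →
      Step M (.conf x q w) (.conf [] q' (x ++ w))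
  | accept (x w : List A) (q : Q) :
      (∀ b ∈ w, b ∈ M.τ q) → M.δend q = .accept →
      Step M (.conf x q w) .accept

/-- The language accepted by an nrNFAwtl. -/
def lang (M : NrNFAwtl Q A) : Set (List A) :=
  { w | ∃ q₀ ∈ M.I, Relation.ReflTransGen (Step M) (.conf [] q₀ w) .accept }

/-- An nrNFAwtl is deterministic (an nrDFAwtl) if it has a single initial
state and, for every state and every letter (including the end-of-tape
marker), at most one transition is available. -/
def IsDet (M : NrNFAwtl Q A) : Prop :=
  (∃ q, M.I = {q}) ∧ (∀ q a, (M.δ q a).Subsingleton) ∧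
  (∀ q S, M.δend q = .cont S → S.Subsingleton)

end NrNFAwtl

/-- `L` is accepted by some NFAwtl. -/
def AcceptedByNFAwtl {A : Type} [Fintype A] (L : Set (List A)) : Prop :=
  ∃ (Q : Type) (_ : Fintype Q) (M : NFAwtl Q A), M.lang = L

/-- `L` is accepted by some DFAwtl. -/
def AcceptedByDFAwtl {A : Type} [Fintype A] (L : Set (List A)) : Prop :=
  ∃ (Q : Type) (_ : Fintype Q) (M : NFAwtl Q A), M.IsDet ∧ M.lang = L

/-- `L` is accepted by some nrNFAwtl. -/
def AcceptedByNrNFAwtl {A : Type} [Fintype A] (L : Set (List A)) : Prop :=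
  ∃ (Q : Type) (_ : Fintype Q) (M : NrNFAwtl Q A), M.lang = L

/-- `L` is accepted by some nrDFAwtl. -/
def AcceptedByNrDFAwtl {A : Type} [Fintype A] (L : Set (List A)) : Prop :=
  ∃ (Q : Type) (_ : Fintype Q) (M : NrNFAwtl Q A), M.IsDet ∧ M.lang = L

/-- `IsShuffle u v w` says that `w` is an interleaving (shuffle) of `u` and `v`. -/
inductive IsShuffle {A : Type} : List A → List A → List A → Prop
  | nil : IsShuffle [] [] []
  | left (a : A) (u v w : List A) : IsShuffle u v w → IsShuffle (a :: u) v (a :: w)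
  | right (a : A) (u v w : List A) : IsShuffle u v w → IsShuffle u (a :: v) (a :: w)

/-- The four-letter alphabet `{a, b, a', b'}` (`pa` stands for `a'`, `pb` for `b'`). -/
inductive Δ4 : Type
  | a | b | pa | pb
deriving DecidableEq

instance : Fintype Δ4 where
  elems := {Δ4.a, Δ4.b, Δ4.pa, Δ4.pb}
  complete := fun x => by cases x <;> simp

/-- The morphism `φ` with `φ(a) = a'` and `φ(b) = b'` (on letters). -/
def primeLetter : Δ4 → Δ4
  | .a => .pa
  | .b => .pb
  | x => x

/-- The language `L_c = ⋃_{w ∈ {a,b}*} sh(w, φ(w))` of all shuffles of a word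
`w ∈ {a,b}*` with its primed copy `φ(w)`. -/
def Lc : Set (List Δ4) :=
  { z | ∃ w : List Δ4, (∀ x ∈ w, x = Δ4.a ∨ x = Δ4.b) ∧
        IsShuffle w (w.map primeLetter) z }

namespace LcProof

/-- `prm x = true` iff `x` is a primed letter. -/
def prm : Δ4 → Bool
  | .a => false
  | .b => false
  | .pa => true
  | .pb => true

/-- The states of our DFAwtl. -/
inductive St : Type
  | s0 | sa | sb | spa | spb
deriving DecidableEq

instance : Fintype St where
  elems := {St.s0, St.sa, St.sb, St.spa, St.spb}
  complete := fun x => by cases x <;> simp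

open St Δ4

/-- The DFAwtl accepting `Lc`. -/
def M : NFAwtl St Δ4 where
  τ q := match q with
    | s0 => ∅
    | sa | sb => {x | prm x = false}
    | spa | spb => {x | prm x = true}
  I := {s0}
  F := {s0}
  δ q x := match q, x with
    | s0, .a => {sa}
    | s0, .b => {sb}
    | s0, .pa => {spa}
    | s0, .pb => {spb}
    | sa, .pa => {s0}
    | sb, .pb => {s0}
    | spa, .a => {s0}
    | spb, .b => {s0}
    | _, _ => ∅
  tr_compat q x h := by
    cases q <;> cases x <;> simp_all [prm, Set.mem_setOf_eq] <;> rfl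

lemma filter_prm_of_unp (u : List Δ4) (h : ∀ b ∈ u, prm b = false) :
    u.filter prm = [] :=
  List.filter_eq_nil_iff.mpr (by intro b hb; simp [h b hb])

lemma filter_unp_of_unp (u : List Δ4) (h : ∀ b ∈ u, prm b = false) :
    u.filter (fun x => !prm x) = u :=
  List.filter_eq_self.mpr (by intro b hb; simp [h b hb])

lemma filter_prm_of_prm (u : List Δ4) (h : ∀ b ∈ u, prm b = true) :
    u.filter prm = u :=
  List.filter_eq_self.mpr (by intro b hb; simp [h b hb])

lemma filter_unp_of_prm (u : List Δ4) (h : ∀ b ∈ u, prm b = true) :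
    u.filter (fun x => !prm x) = [] :=
  List.filter_eq_nil_iff.mpr (by intro b hb; simp [h b hb])

/-- Splitting off the first letter satisfying `P`. -/
lemma split_first (P : Δ4 → Bool) (v : List Δ4) (c : Δ4) (l : List Δ4)
    (h : v.filter P = c :: l) :
    ∃ u₁ v₁, v = u₁ ++ c :: v₁ ∧ (∀ b ∈ u₁, P b = false) ∧ v₁.filter P = l := by
  induction v with
  | nil => simp at h
  | cons x xs ih =>
    cases hP : P x with
    | true =>
      rw [List.filter_cons_of_pos hP] at h
      obtain ⟨rfl, rfl⟩ := List.cons.inj h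
      exact ⟨[], xs, by simp, by simp, rfl⟩
    | false =>
      rw [List.filter_cons_of_neg (by simp [hP])] at h
      obtain ⟨u₁, v₁, h1, h2, h3⟩ := ih h
      refine ⟨x :: u₁, v₁, by simp [h1], ?_, h3⟩
      intro b hb
      rcases List.mem_cons.mp hb with rfl | hb
      · exact hP
      · exact h2 b hb

/-- The invariant attached to each configuration. -/
def Good : St × List Δ4 → Prop
  | (s0, w) => w.filter prm = (w.filter (fun x => !prm x)).map primeLetter
  | (sa, w) => w.filter prm = .pa :: (w.filter (fun x => !prm x)).map primeLetter
  | (sb, w) => w.filter prm = .pb :: (w.filter (fun x => !prm x)).map primeLetter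
  | (spa, w) => (w.filter (fun x => !prm x)).map primeLetter = .pa :: w.filter prm
  | (spb, w) => (w.filter (fun x => !prm x)).map primeLetter = .pb :: w.filter prm

lemma good_back {c c' : St × List Δ4} (h : NFAwtl.Step M c c') (hg : Good c') :
    Good c := by
  cases h with
  | read q q' u v x hu hx hq' =>
    cases q with
    | s0 =>
      have hu0 : u = [] := by
        cases u with
        | nil => rfl
        | cons y ys => exact absurd (hu y (by simp)) (by simp [M])
      subst hu0
      cases x <;>
        simp only [M, Set.mem_singleton_iff] at hq' <;> subst hq' <;>
        first
          | simpa [Good, List.filter_cons, prm, primeLetter] using hg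
          | simpa [Good, List.filter_cons, prm, primeLetter] using hg.symm
    | sa =>
      cases x with
      | a => exact absurd (show Δ4.a ∈ M.τ sa by simp [M, prm]) hx
      | b => exact absurd (show Δ4.b ∈ M.τ sa by simp [M, prm]) hx
      | pb => simp [M] at hq'
      | pa =>
        simp only [M, Set.mem_singleton_iff] at hq'; subst hq'
        have h1 : ∀ b ∈ u, prm b = false := by
          intro b hb; simpa [M] using hu b hb
        simp only [Good, List.filter_append, List.filter_cons, prm,
          filter_prm_of_unp u h1, filter_unp_of_unp u h1, List.map_append] at hg ⊢
        simpa using hg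
    | sb =>
      cases x with
      | a => exact absurd (show Δ4.a ∈ M.τ sb by simp [M, prm]) hx
      | b => exact absurd (show Δ4.b ∈ M.τ sb by simp [M, prm]) hx
      | pa => simp [M] at hq'
      | pb =>
        simp only [M, Set.mem_singleton_iff] at hq'; subst hq'
        have h1 : ∀ b ∈ u, prm b = false := by
          intro b hb; simpa [M] using hu b hb
        simp only [Good, List.filter_append, List.filter_cons, prm,
          filter_prm_of_unp u h1, filter_unp_of_unp u h1, List.map_append] at hg ⊢
        simpa using hg
    | spa =>
      cases x with
      | pa => exact absurd (show Δ4.pa ∈ M.τ spa by simp [M, prm]) hx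
      | pb => exact absurd (show Δ4.pb ∈ M.τ spa by simp [M, prm]) hx
      | b => simp [M] at hq'
      | a =>
        simp only [M, Set.mem_singleton_iff] at hq'; subst hq'
        have h1 : ∀ b ∈ u, prm b = true := by
          intro b hb; simpa [M] using hu b hb
        have e1 : (u ++ (Δ4.a :: v)).filter prm = u ++ v.filter prm := by
          rw [List.filter_append, filter_prm_of_prm u h1,
            List.filter_cons_of_neg (by simp [prm])]
        have e2 : (u ++ (Δ4.a :: v)).filter (fun x => !prm x)
            = Δ4.a :: v.filter (fun x => !prm x) := by
          rw [List.filter_append, filter_unp_of_prm u h1,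
            List.filter_cons_of_pos (by simp [prm]), List.nil_append]
        have e3 : (u ++ v).filter prm = u ++ v.filter prm := by
          rw [List.filter_append, filter_prm_of_prm u h1]
        have e4 : (u ++ v).filter (fun x => !prm x) = v.filter (fun x => !prm x) := by
          rw [List.filter_append, filter_unp_of_prm u h1, List.nil_append]
        simp only [Good, e3, e4] at hg
        simp only [Good, e1, e2, List.map_cons]
        rw [← hg]; rfl
    | spb =>
      cases x with
      | pa => exact absurd (show Δ4.pa ∈ M.τ spb by simp [M, prm]) hx
      | pb => exact absurd (show Δ4.pb ∈ M.τ spb by simp [M, prm]) hx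
      | a => simp [M] at hq'
      | b =>
        simp only [M, Set.mem_singleton_iff] at hq'; subst hq'
        have h1 : ∀ b ∈ u, prm b = true := by
          intro b hb; simpa [M] using hu b hb
        have e1 : (u ++ (Δ4.b :: v)).filter prm = u ++ v.filter prm := by
          rw [List.filter_append, filter_prm_of_prm u h1,
            List.filter_cons_of_neg (by simp [prm])]
        have e2 : (u ++ (Δ4.b :: v)).filter (fun x => !prm x)
            = Δ4.b :: v.filter (fun x => !prm x) := by
          rw [List.filter_append, filter_unp_of_prm u h1,
            List.filter_cons_of_pos (by simp [prm]), List.nil_append]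
        have e3 : (u ++ v).filter prm = u ++ v.filter prm := by
          rw [List.filter_append, filter_prm_of_prm u h1]
        have e4 : (u ++ v).filter (fun x => !prm x) = v.filter (fun x => !prm x) := by
          rw [List.filter_append, filter_unp_of_prm u h1, List.nil_append]
        simp only [Good, e3, e4] at hg
        simp only [Good, e1, e2, List.map_cons]
        rw [← hg]; rfl

lemma good_of_reach {c : St × List Δ4}
    (h : Relation.ReflTransGen (NFAwtl.Step M) c (s0, [])) : Good c := by
  induction h using Relation.ReflTransGen.head_induction_on with
  | refl => simp [Good]
  | head hstep _ ih => exact good_back hstep ih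

/-- Completeness: from a balanced word we can reach the accepting configuration. -/
lemma reach : ∀ n (v : List Δ4), v.length ≤ n →
    v.filter prm = (v.filter (fun x => !prm x)).map primeLetter →
    Relation.ReflTransGen (NFAwtl.Step M) (s0, v) (s0, []) := by
  intro n
  induction n with
  | zero =>
    intro v hv _
    have : v = [] := List.eq_nil_of_length_eq_zero (Nat.le_zero.mp hv)
    subst this; exact Relation.ReflTransGen.refl
  | succ n ih =>
    intro v hv hbal
    cases v with
    | nil => exact Relation.ReflTransGen.refl
    | cons x v' =>
      cases x with
      | a =>
        have hbal' : v'.filter prm =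
            Δ4.pa :: (v'.filter (fun x => !prm x)).map primeLetter := by
          simpa [List.filter_cons, prm, primeLetter] using hbal
        obtain ⟨u₁, v₁, rfl, h2, h3⟩ := split_first prm v' _ _ hbal'
        have step1 : NFAwtl.Step M (s0, Δ4.a :: (u₁ ++ Δ4.pa :: v₁)) (sa, u₁ ++ Δ4.pa :: v₁) :=
          NFAwtl.Step.read s0 sa [] (u₁ ++ Δ4.pa :: v₁) Δ4.a
            (by simp) (by simp [M]) (by simp [M])
        have step2 : NFAwtl.Step M (sa, u₁ ++ Δ4.pa :: v₁) (s0, u₁ ++ v₁) :=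
          NFAwtl.Step.read sa s0 u₁ v₁ Δ4.pa
            (by intro b hb; simp [M, h2 b hb]) (by simp [M, prm]) (by simp [M])
        refine Relation.ReflTransGen.head step1 (Relation.ReflTransGen.head step2 (ih _ ?_ ?_))
        · simp only [List.length_cons, List.length_append] at hv ⊢; omega
        · have hf1 : (u₁ ++ Δ4.pa :: v₁).filter (fun x => !prm x) =
              (u₁ ++ v₁).filter (fun x => !prm x) := by
            rw [List.filter_append, List.filter_append,
              List.filter_cons_of_neg (by simp [prm])]
          have hf2 : (u₁ ++ v₁).filter prm = v₁.filter prm := by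
            rw [List.filter_append, filter_prm_of_unp u₁ h2, List.nil_append]
          rw [hf2, h3, hf1]
      | b =>
        have hbal' : v'.filter prm =
            Δ4.pb :: (v'.filter (fun x => !prm x)).map primeLetter := by
          simpa [List.filter_cons, prm, primeLetter] using hbal
        obtain ⟨u₁, v₁, rfl, h2, h3⟩ := split_first prm v' _ _ hbal'
        have step1 : NFAwtl.Step M (s0, Δ4.b :: (u₁ ++ Δ4.pb :: v₁)) (sb, u₁ ++ Δ4.pb :: v₁) :=
          NFAwtl.Step.read s0 sb [] (u₁ ++ Δ4.pb :: v₁) Δ4.b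
            (by simp) (by simp [M]) (by simp [M])
        have step2 : NFAwtl.Step M (sb, u₁ ++ Δ4.pb :: v₁) (s0, u₁ ++ v₁) :=
          NFAwtl.Step.read sb s0 u₁ v₁ Δ4.pb
            (by intro b hb; simp [M, h2 b hb]) (by simp [M, prm]) (by simp [M])
        refine Relation.ReflTransGen.head step1 (Relation.ReflTransGen.head step2 (ih _ ?_ ?_))
        · simp only [List.length_cons, List.length_append] at hv ⊢; omega
        · have hf1 : (u₁ ++ Δ4.pb :: v₁).filter (fun x => !prm x) =
              (u₁ ++ v₁).filter (fun x => !prm x) := by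
            rw [List.filter_append, List.filter_append,
              List.filter_cons_of_neg (by simp [prm])]
          have hf2 : (u₁ ++ v₁).filter prm = v₁.filter prm := by
            rw [List.filter_append, filter_prm_of_unp u₁ h2, List.nil_append]
          rw [hf2, h3, hf1]
      | pa =>
        -- φ(unprimed part of v') = pa :: primed part of v'
        have hbal' : (v'.filter (fun x => !prm x)).map primeLetter =
            Δ4.pa :: v'.filter prm := by
          simpa [List.filter_cons, prm] using hbal.symm
        -- hence the unprimed part of v' starts with `a`
        obtain ⟨y, l, hyl⟩ : ∃ y l, v'.filter (fun x => !prm x) = y :: l := by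
          cases hc : v'.filter (fun x => !prm x) with
          | nil => rw [hc] at hbal'; simp at hbal'
          | cons y l => exact ⟨y, l, rfl⟩
        have hy : y = Δ4.a ∧ l.map primeLetter = v'.filter prm := by
          rw [hyl] at hbal'
          simp only [List.map_cons, List.cons.injEq] at hbal'
          refine ⟨?_, hbal'.2⟩
          have hym : y ∈ v'.filter (fun x => !prm x) := by rw [hyl]; simp
          have hyun : prm y = false := by simpa using List.of_mem_filter hym
          cases y <;> simp_all [prm, primeLetter]
        obtain ⟨rfl, hl⟩ := hy
        obtain ⟨u₁, v₁, rfl, h2, h3⟩ := split_first (fun x => !prm x) v' _ _ hyl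
        have h2' : ∀ b ∈ u₁, prm b = true := by
          intro b hb; simpa using h2 b hb
        have step1 : NFAwtl.Step M (s0, Δ4.pa :: (u₁ ++ Δ4.a :: v₁)) (spa, u₁ ++ Δ4.a :: v₁) :=
          NFAwtl.Step.read s0 spa [] (u₁ ++ Δ4.a :: v₁) Δ4.pa
            (by simp) (by simp [M]) (by simp [M])
        have step2 : NFAwtl.Step M (spa, u₁ ++ Δ4.a :: v₁) (s0, u₁ ++ v₁) :=
          NFAwtl.Step.read spa s0 u₁ v₁ Δ4.a
            (by intro b hb; simp [M, h2' b hb]) (by simp [M, prm]) (by simp [M])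
        refine Relation.ReflTransGen.head step1 (Relation.ReflTransGen.head step2 (ih _ ?_ ?_))
        · simp only [List.length_cons, List.length_append] at hv ⊢; omega
        · have hfv' : (u₁ ++ Δ4.a :: v₁).filter prm = u₁ ++ v₁.filter prm := by
            simp [List.filter_append, filter_prm_of_prm u₁ h2', List.filter_cons, prm]
          rw [hfv'] at hl
          simp only [List.filter_append, filter_prm_of_prm u₁ h2',
            filter_unp_of_prm u₁ h2', List.nil_append, h3]
          exact hl.symm
      | pb =>
        have hbal' : (v'.filter (fun x => !prm x)).map primeLetter =
            Δ4.pb :: v'.filter prm := by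
          simpa [List.filter_cons, prm] using hbal.symm
        obtain ⟨y, l, hyl⟩ : ∃ y l, v'.filter (fun x => !prm x) = y :: l := by
          cases hc : v'.filter (fun x => !prm x) with
          | nil => rw [hc] at hbal'; simp at hbal'
          | cons y l => exact ⟨y, l, rfl⟩
        have hy : y = Δ4.b ∧ l.map primeLetter = v'.filter prm := by
          rw [hyl] at hbal'
          simp only [List.map_cons, List.cons.injEq] at hbal'
          refine ⟨?_, hbal'.2⟩
          have hym : y ∈ v'.filter (fun x => !prm x) := by rw [hyl]; simp
          have hyun : prm y = false := by simpa using List.of_mem_filter hym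
          cases y <;> simp_all [prm, primeLetter]
        obtain ⟨rfl, hl⟩ := hy
        obtain ⟨u₁, v₁, rfl, h2, h3⟩ := split_first (fun x => !prm x) v' _ _ hyl
        have h2' : ∀ b ∈ u₁, prm b = true := by
          intro b hb; simpa using h2 b hb
        have step1 : NFAwtl.Step M (s0, Δ4.pb :: (u₁ ++ Δ4.b :: v₁)) (spb, u₁ ++ Δ4.b :: v₁) :=
          NFAwtl.Step.read s0 spb [] (u₁ ++ Δ4.b :: v₁) Δ4.pb
            (by simp) (by simp [M]) (by simp [M])
        have step2 : NFAwtl.Step M (spb, u₁ ++ Δ4.b :: v₁) (s0, u₁ ++ v₁) :=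
          NFAwtl.Step.read spb s0 u₁ v₁ Δ4.b
            (by intro b hb; simp [M, h2' b hb]) (by simp [M, prm]) (by simp [M])
        refine Relation.ReflTransGen.head step1 (Relation.ReflTransGen.head step2 (ih _ ?_ ?_))
        · simp only [List.length_cons, List.length_append] at hv ⊢; omega
        · have hfv' : (u₁ ++ Δ4.b :: v₁).filter prm = u₁ ++ v₁.filter prm := by
            simp [List.filter_append, filter_prm_of_prm u₁ h2', List.filter_cons, prm]
          rw [hfv'] at hl
          simp only [List.filter_append, filter_prm_of_prm u₁ h2',
            filter_unp_of_prm u₁ h2', List.nil_append, h3]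
          exact hl.symm

/-- Any list is a shuffle of its two complementary filters. -/
lemma shuffle_filter (P : Δ4 → Bool) (z : List Δ4) :
    IsShuffle (z.filter (fun x => !P x)) (z.filter P) z := by
  induction z with
  | nil => exact IsShuffle.nil
  | cons x xs ih =>
    cases hP : P x with
    | true =>
      rw [List.filter_cons_of_pos hP, List.filter_cons_of_neg (by simp [hP])]
      exact IsShuffle.right x _ _ _ ih
    | false =>
      rw [List.filter_cons_of_pos (p := fun x => !P x) (by simp [hP]),
        List.filter_cons_of_neg (by simp [hP])]
      exact IsShuffle.left x _ _ _ ih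

/-- A shuffle of an unprimed word with a primed word determines the filters. -/
lemma shuffle_filters {u v z : List Δ4} (h : IsShuffle u v z)
    (hu : ∀ x ∈ u, prm x = false) (hv : ∀ x ∈ v, prm x = true) :
    z.filter prm = v ∧ z.filter (fun x => !prm x) = u := by
  induction h with
  | nil => simp
  | left a u v w h ih =>
    have ha : prm a = false := hu a (by simp)
    have := ih (fun x hx => hu x (by simp [hx])) hv
    rw [List.filter_cons_of_neg (by simp [ha]), List.filter_cons_of_pos (by simp [ha])]
    exact ⟨this.1, by rw [this.2]⟩
  | right a u v w h ih =>
    have ha : prm a = true := hv a (by simp)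
    have := ih hu (fun x hx => hv x (by simp [hx]))
    rw [List.filter_cons_of_pos ha, List.filter_cons_of_neg (by simp [ha])]
    exact ⟨by rw [this.1], this.2⟩

lemma lang_eq : M.lang = Lc := by
  ext z
  constructor
  · rintro ⟨q₀, hq₀, q, w', hreach, hw', hF⟩
    have hq₀' : q₀ = s0 := by simpa [M] using hq₀
    have hqF : q = s0 := by simpa [M] using hF
    subst hq₀'; subst hqF
    have hw'nil : w' = [] := by
      cases w' with
      | nil => rfl
      | cons y ys => exact absurd (hw' y (by simp)) (by simp [M])
    subst hw'nil
    have hg : Good (s0, z) := good_of_reach hreach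
    simp only [Good] at hg
    refine ⟨z.filter (fun x => !prm x), ?_, ?_⟩
    · intro x hx
      have := List.of_mem_filter hx
      cases x <;> simp_all [prm]
    · rw [← hg]; exact shuffle_filter prm z
  · rintro ⟨w, hw, hsh⟩
    have hwu : ∀ x ∈ w, prm x = false := by
      intro x hx; rcases hw x hx with rfl | rfl <;> rfl
    have hwp : ∀ x ∈ w.map primeLetter, prm x = true := by
      intro x hx
      obtain ⟨y, hy, rfl⟩ := List.mem_map.mp hx
      rcases hw y hy with rfl | rfl <;> rfl
    obtain ⟨h1, h2⟩ := shuffle_filters hsh hwu hwp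
    refine ⟨s0, by simp [M], s0, [], ?_, by simp, by simp [M]⟩
    exact reach z.length z le_rfl (by rw [h1, h2])

lemma isDet : M.IsDet := by
  refine ⟨⟨s0, rfl⟩, ?_⟩
  intro q x
  cases q <;> cases x <;>
    first
      | exact Set.subsingleton_singleton
      | exact Set.subsingleton_empty

end LcProof

/-- The language `L_c` is accepted by a DFAwtl. -/
theorem Lc_accepted_by_DFAwtl : AcceptedByDFAwtl Lc := by
  exact ⟨LcProof.St, inferInstance, LcProof.M, LcProof.isDet, LcProof.lang_eq⟩
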